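/- arXiv:2112.09248 — 6 statements merged into one kernel-verified Lean document; each statement's English description precedes it below -/
import Mathlib

section
/- For every finite connected simple graph G with at least one edge, there exists a maximum matching M of G such that the subgraph of G induced by the M-saturated vertices is connected. (Equivalently, the maximum size of a connected matching of G equals the maximum size of a matching of G.) -/
open SimpleGraph

/-- `M` is a matching of `G`, viewed as a set of edges: every element of `M` is an
edge of `G`, and no two distinct edges of `M` share an endpoint. -/
def MatchingEdges {V : Type*} (G : SimpleGraph V) (M : Set (Sym2 V)) : Prop :=
  M ⊆ G.edgeSet ∧ ∀ e ∈ M, ∀ f ∈ M, e ≠ f → ∀ v : V, v ∈ e → v ∉ f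

/-- The set of `M`-saturated vertices, i.e. endpoints of edges of `M`. -/
def msat {V : Type*} (M : Set (Sym2 V)) : Set V := {v | ∃ e ∈ M, v ∈ e}

/-!
Among all pairs `(M, T)` of a matching `M` and a set `T` of `M`-saturated vertices inducing a
preconnected subgraph, take one maximising `(|M|, |T|)` lexicographically; `M` is then a maximum
matching, and we show `T = V(M)`. Otherwise, since `G` is connected and no saturated vertex
outside `T` is adjacent to `T`, there is a path `k u c` with `k ∈ T`, `u, c ∉ T`, and `u`
unsaturated. If `c` is unsaturated, `uc` augments `M`. If `c` is matched to `c'`, then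
`c, c' ∉ T`, and replacing `cc'` by `uc` gives a matching of the same size whose saturated
vertices contain the preconnected set `T ∪ {u}`.
-/

section

variable {V : Type*} {G : SimpleGraph V}

theorem SimpleGraph.Preconnected.exists_adj_adj_of_notMem (hG : G.Preconnected) {T : Set V}
    {t s : V} (ht : t ∈ T) (hs : s ∉ T) (hsT : ∀ k ∈ T, ¬G.Adj k s) :
    ∃ k ∈ T, ∃ u ∉ T, ∃ c ∉ T, G.Adj k u ∧ G.Adj u c := by
  obtain ⟨p⟩ := hG t s
  obtain ⟨d, -, hd, hd'⟩ := p.exists_boundary_dart {v | v ∈ T ∨ ∃ k ∈ T, G.Adj k v}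
    (Or.inl ht) (by rintro (h | ⟨k, hk, h⟩); exacts [hs h, hsT k hk h])
  simp only [Set.mem_ofPred_eq, not_or, not_exists, not_and] at hd'
  by_cases huT : d.fst ∈ T
  · exact absurd d.adj (hd'.2 _ huT)
  · obtain ⟨k, hk, hku⟩ := hd.resolve_left huT
    exact ⟨k, hk, d.fst, huT, d.snd, hd'.1, hku, d.adj⟩

theorem msat_mono {M M' : Set (Sym2 V)} (h : M ⊆ M') : msat M ⊆ msat M' :=
  fun _ ⟨e, he, hv⟩ => ⟨e, h he, hv⟩

theorem matchingEdges_singleton {e : Sym2 V} (he : e ∈ G.edgeSet) : MatchingEdges G {e} :=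
  ⟨Set.singleton_subset_iff.mpr he, fun _ he _ hf hne => absurd (he.trans hf.symm) hne⟩

namespace MatchingEdges

variable {M : Set (Sym2 V)}

theorem anti (hM : MatchingEdges G M) {M' : Set (Sym2 V)} (h : M' ⊆ M) : MatchingEdges G M' :=
  ⟨h.trans hM.1, fun e he f hf => hM.2 e (h he) f (h hf)⟩

theorem augment (hM : MatchingEdges G M) {u v : V} (huv : G.Adj u v) (hu : u ∉ msat M)
    (hv : v ∉ msat M) : MatchingEdges G (insert s(u, v) M) := by
  have hfree : ∀ e ∈ M, ∀ w ∈ s(u, v), w ∉ e := by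
    rintro e he w hw hwe
    rcases Sym2.mem_iff.mp hw with rfl | rfl
    exacts [hu ⟨e, he, hwe⟩, hv ⟨e, he, hwe⟩]
  refine ⟨Set.insert_subset huv hM.1, ?_⟩
  rintro e (rfl | he) f (rfl | hf) hne w hwe hwf
  · exact hne rfl
  · exact hfree f hf w hwe hwf
  · exact hfree e he w hwf hwe
  · exact hM.2 e he f hf hne w hwe hwf

theorem msat_diff_singleton (hM : MatchingEdges G M) {c c' : V} (h : s(c, c') ∈ M) :
    msat (M \ {s(c, c')}) = msat M \ {c, c'} := by
  ext v
  constructor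
  · rintro ⟨e, ⟨he, hne⟩, hve⟩
    refine ⟨⟨e, he, hve⟩, fun hv => hM.2 e he _ h hne v hve ?_⟩
    rcases hv with rfl | rfl <;> simp
  · rintro ⟨⟨e, he, hve⟩, hv⟩
    refine ⟨e, ⟨he, ?_⟩, hve⟩
    rintro rfl
    exact hv (Sym2.mem_iff.mp hve)

theorem swap (hM : MatchingEdges G M) {u c c' : V} (h : s(c, c') ∈ M) (hu : u ∉ msat M)
    (huc : G.Adj u c) : MatchingEdges G (insert s(u, c) (M \ {s(c, c')})) := by
  refine (hM.anti Set.sdiff_subset).augment huc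
    (fun hu' => hu (msat_mono Set.sdiff_subset hu')) ?_
  rw [hM.msat_diff_singleton h]
  simp

end MatchingEdges

theorem ncard_swap [Finite V] {M : Set (Sym2 V)} {u c c' : V} (h : s(c, c') ∈ M)
    (hu : u ∉ msat M) : (insert s(u, c) (M \ {s(c, c')})).ncard = M.ncard := by
  have hucM : s(u, c) ∉ M \ {s(c, c')} := fun huc => hu ⟨_, huc.1, Sym2.mem_mk_left u c⟩
  rw [Set.ncard_insert_of_notMem hucM, Set.ncard_sdiff_singleton_add_one h]

def IsMatchingWithCluster (G : SimpleGraph V) (M : Set (Sym2 V)) (T : Set V) : Prop :=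
  MatchingEdges G M ∧ T ⊆ msat M ∧ (G.induce T).Preconnected

def IsLexMaxCluster (G : SimpleGraph V) (M : Set (Sym2 V)) (T : Set V) : Prop :=
  IsMatchingWithCluster G M T ∧ ∀ M' T', IsMatchingWithCluster G M' T' →
    toLex (M'.ncard, T'.ncard) ≤ toLex (M.ncard, T.ncard)

theorem exists_isLexMaxCluster [Finite V] (G : SimpleGraph V) :
    ∃ M T, IsLexMaxCluster G M T := by
  have : Nonempty {p : Set (Sym2 V) × Set V // IsMatchingWithCluster G p.1 p.2} :=
    ⟨⟨(∅, ∅), ⟨Set.empty_subset _, by simp⟩, Set.empty_subset _,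
      Preconnected.of_subsingleton⟩⟩
  obtain ⟨⟨⟨M, T⟩, h⟩, hmax⟩ :=
    Finite.exists_max fun p : {p : Set (Sym2 V) × Set V // IsMatchingWithCluster G p.1 p.2} =>
      toLex (p.1.1.ncard, p.1.2.ncard)
  exact ⟨M, T, h, fun M' T' h' => hmax ⟨(M', T'), h'⟩⟩

namespace IsLexMaxCluster

variable {M : Set (Sym2 V)} {T : Set V}

theorem ncard_le (h : IsLexMaxCluster G M T) {M' : Set (Sym2 V)} (hM' : MatchingEdges G M') :
    M'.ncard ≤ M.ncard := by
  have := h.2 M' ∅ ⟨hM', Set.empty_subset _, Preconnected.of_subsingleton⟩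
  rw [Prod.Lex.toLex_le_toLex] at this
  omega

theorem ncard_le_of_ncard_eq (h : IsLexMaxCluster G M T) {M' : Set (Sym2 V)} {T' : Set V}
    (h' : IsMatchingWithCluster G M' T') (hM' : M'.ncard = M.ncard) : T'.ncard ≤ T.ncard := by
  have := h.2 M' T' h'
  rw [Prod.Lex.toLex_le_toLex] at this
  omega

theorem not_adj_of_insert_subset [Finite V] (h : IsLexMaxCluster G M T) {M' : Set (Sym2 V)}
    {k u : V} (hM' : MatchingEdges G M') (hMM' : M'.ncard = M.ncard)
    (hT : insert u T ⊆ msat M') (hk : k ∈ T) (hu : u ∉ T) : ¬G.Adj k u := by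
  intro hku
  have hconn : (G.induce (insert u T)).Preconnected := by
    rw [← Set.union_singleton]
    exact (connected_induce_union h.1.2.2 Preconnected.of_subsingleton hk
      (Set.mem_singleton u) hku).preconnected
  have := h.ncard_le_of_ncard_eq ⟨hM', hT, hconn⟩ hMM'
  rw [Set.ncard_insert_of_notMem hu] at this
  omega

theorem not_adj [Finite V] (h : IsLexMaxCluster G M T) {k s : V} (hk : k ∈ T) (hs : s ∈ msat M)
    (hsT : s ∉ T) : ¬G.Adj k s :=
  h.not_adj_of_insert_subset h.1.1 rfl (Set.insert_subset hs h.1.2.1) hk hsT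

theorem nonempty (h : IsLexMaxCluster G M T) {s : V} (hs : s ∈ msat M) : T.Nonempty := by
  have := h.ncard_le_of_ncard_eq
    ⟨h.1.1, Set.singleton_subset_iff.mpr hs, Preconnected.of_subsingleton⟩ rfl
  rw [Set.ncard_singleton] at this
  exact Set.nonempty_of_ncard_ne_zero (by omega)

theorem msat_subset [Finite V] (h : IsLexMaxCluster G M T) (hG : G.Preconnected) :
    msat M ⊆ T := by
  intro s hs
  by_contra hsT
  obtain ⟨t, ht⟩ := h.nonempty hs
  obtain ⟨k, hk, u, huT, c, hcT, hku, huc⟩ :=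
    hG.exists_adj_adj_of_notMem ht hsT fun k hk => h.not_adj hk hs hsT
  have hu : u ∉ msat M := fun hu => h.not_adj hk hu huT hku
  by_cases hc : c ∈ msat M
  · obtain ⟨e, he, hce⟩ := hc
    obtain ⟨c', rfl⟩ := Sym2.mem_iff_exists.mp hce
    have hc'T : c' ∉ T := fun hc' => h.not_adj hc' ⟨_, he, Sym2.mem_mk_left c c'⟩ hcT
      (h.1.1.1 he).symm
    have hT : T ⊆ msat (M \ {s(c, c')}) := by
      rw [h.1.1.msat_diff_singleton he]
      intro v hv
      exact ⟨h.1.2.1 hv, by rintro (rfl | rfl) <;> contradiction⟩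
    exact h.not_adj_of_insert_subset (h.1.1.swap he hu huc) (ncard_swap he hu)
      (Set.insert_subset ⟨_, Set.mem_insert _ _, Sym2.mem_mk_left u c⟩
        (hT.trans (msat_mono (Set.subset_insert _ _)))) hk huT hku
  · have hucM : s(u, c) ∉ M := fun huc => hu ⟨_, huc, Sym2.mem_mk_left u c⟩
    have := h.ncard_le (h.1.1.augment huc hu hc)
    rw [Set.ncard_insert_of_notMem hucM] at this
    omega

end IsLexMaxCluster

end

/-- For every finite connected simple graph with at least one edge, there exists a
maximum matching `M` such that the subgraph induced by the `M`-saturated vertices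
is connected. -/
theorem exists_maximum_connected_matching {V : Type*} [Fintype V] (G : SimpleGraph V)
    (hconn : G.Connected) (hedge : G.edgeSet.Nonempty) :
    ∃ M : Set (Sym2 V), MatchingEdges G M ∧
      (∀ M' : Set (Sym2 V), MatchingEdges G M' → M'.ncard ≤ M.ncard) ∧
      (G.induce (msat M)).Connected := by
  obtain ⟨M, T, hopt⟩ := exists_isLexMaxCluster G
  obtain ⟨e, he⟩ := hedge
  obtain ⟨f, hf⟩ : M.Nonempty := Set.nonempty_of_ncard_ne_zero <| by
    have := hopt.ncard_le (matchingEdges_singleton he)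
    rw [Set.ncard_singleton] at this
    omega
  have hsat : f.out.1 ∈ msat M := ⟨f, hf, Sym2.out_fst_mem f⟩
  have hT : T = msat M := hopt.1.2.1.antisymm (hopt.msat_subset hconn.preconnected)
  refine ⟨M, hopt.1.1, fun _ => hopt.ncard_le, ?_⟩
  rw [← hT]
  exact connected_iff _ |>.mpr ⟨hopt.1.2.2, (hopt.nonempty hsat).to_subtype⟩
end

section
/- Let M be a matching of a finite simple graph G such that the subgraph G[M] induced by the M-saturated vertices has at least c connected components. Then G has an induced matching with at least c edges. (In particular, for any matching M, the number of connected components of G[M] is at most the maximum size of an induced matching of G.) -/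
open SimpleGraph

/-- `M` is an induced matching of `G`. -/
def InducedMatchingEdges {V : Type*} (G : SimpleGraph V) (M : Set (Sym2 V)) : Prop :=
  MatchingEdges G M ∧
    ∀ u v : V, u ∈ msat M → v ∈ msat M → G.Adj u v → s(u, v) ∈ M

/-- If `M` is a matching such that the graph induced by the `M`-saturated vertices has at
least `c` connected components, then `G` has an induced matching with at least `c` edges. -/
theorem induced_matching_of_disconnected_matching {V : Type*} [Fintype V]
    (G : SimpleGraph V) (M : Set (Sym2 V)) (hM : MatchingEdges G M) (c : ℕ)
    (hc : c ≤ Nat.card (G.induce (msat M)).ConnectedComponent) :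
    ∃ M' : Set (Sym2 V), InducedMatchingEdges G M' ∧ c ≤ M'.ncard := by
  classical
  set W := msat M with hW
  set H := G.induce W with hH
  -- both endpoints of an edge of M lie in the same component
  have same_comp : ∀ e ∈ M, ∀ a b : V, a ∈ e → b ∈ e → ∀ (ha : a ∈ W) (hb : b ∈ W),
      H.connectedComponentMk ⟨a, ha⟩ = H.connectedComponentMk ⟨b, hb⟩ := by
    intro e he a b hae hbe ha hb
    by_cases hab : a = b
    · subst hab; rfl
    · induction e with
      | h x y =>
        have hadj : G.Adj x y := hM.1 he
        rw [Sym2.mem_iff] at hae hbe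
        have hGab : G.Adj a b := by
          rcases hae with rfl | rfl <;> rcases hbe with rfl | rfl
          · exact absurd rfl hab
          · exact hadj
          · exact hadj.symm
          · exact absurd rfl hab
        have hHadj : H.Adj ⟨a, ha⟩ ⟨b, hb⟩ := by
          rw [hH]
          simp [SimpleGraph.comap_adj, hGab]
        exact ConnectedComponent.sound hHadj.reachable
  have hrep : ∀ K : H.ConnectedComponent,
      ∃ e ∈ M, ∃ v : W, H.connectedComponentMk v = K ∧ (v : V) ∈ e := by
    intro K
    obtain ⟨v, hv⟩ := K.exists_rep
    obtain ⟨e, he, hve⟩ := v.2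
    exact ⟨e, he, v, hv, hve⟩
  choose f hfM vf hvf hvfe using hrep
  -- any vertex of `f K` has component `K`
  have hcomp : ∀ (K : H.ConnectedComponent) (u : V) (hu : u ∈ W),
      u ∈ f K → H.connectedComponentMk ⟨u, hu⟩ = K := by
    intro K u hu huf
    have h2 := same_comp (f K) (hfM K) u (vf K) huf (hvfe K) hu (vf K).2
    exact h2.trans (hvf K)
  have hsub : Set.range f ⊆ M := by
    rintro e ⟨K, rfl⟩; exact hfM K
  have hsatW : msat (Set.range f) ⊆ W := by
    rintro v ⟨e, he, hve⟩
    exact ⟨e, hsub he, hve⟩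
  refine ⟨Set.range f, ⟨⟨hsub.trans hM.1, ?_⟩, ?_⟩, ?_⟩
  · intro e he e' he' hne v hv
    exact hM.2 e (hsub he) e' (hsub he') hne v hv
  · -- induced
    intro u v hu hv hadj
    obtain ⟨e1, ⟨K1, rfl⟩, hu1⟩ := hu
    obtain ⟨e2, ⟨K2, rfl⟩, hv2⟩ := hv
    have huW : u ∈ W := ⟨f K1, hfM K1, hu1⟩
    have hvW : v ∈ W := ⟨f K2, hfM K2, hv2⟩
    have hHadj : H.Adj ⟨u, huW⟩ ⟨v, hvW⟩ := by
      rw [hH]; simp [SimpleGraph.comap_adj, hadj]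
    have hKeq : K1 = K2 := by
      rw [← hcomp K1 u huW hu1, ← hcomp K2 v hvW hv2]
      exact ConnectedComponent.sound hHadj.reachable
    subst hKeq
    have : s(u, v) = f K1 := by
      have hne : u ≠ v := hadj.ne
      obtain ⟨x, y, hf⟩ : ∃ x y, f K1 = s(x, y) :=
        ⟨(f K1).out.1, (f K1).out.2, by rw [Sym2.mk]; exact (f K1).out_eq.symm⟩
      rw [hf] at hu1 hv2 ⊢
      rw [Sym2.mem_iff] at hu1 hv2
      rcases hu1 with rfl | rfl <;> rcases hv2 with rfl | rfl
      · exact absurd rfl hne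
      · rfl
      · exact Sym2.eq_swap
      · exact absurd rfl hne
    rw [this]
    exact ⟨K1, rfl⟩
  · -- cardinality
    have hinj : Function.Injective f := by
      intro K1 K2 hff
      have h1 : (vf K1 : V) ∈ f K2 := hff ▸ hvfe K1
      have h2 := hcomp K2 (vf K1) (vf K1).2 h1
      exact (hvf K1).symm.trans h2
    calc c ≤ Nat.card H.ConnectedComponent := hc
      _ = Nat.card (Set.range f) := (Nat.card_range_of_injective hinj).symm
      _ = (Set.range f).ncard := (Nat.card_coe_set_eq _)
end

section
/- Let G be a finite bipartite simple graph with bipartition (V1, V2) (every edge of G joins a vertex of V1 to a vertex of V2), and let G' be obtained from G by adding two new vertices w1 and w2 together with the edge w1w2, all edges w1v for v in V1, and all edges w2v for v in V2. Then for every nonempty matching M of G' that saturates w1 or saturates w2, the subgraph G'[M] induced by the M-saturated vertices is connected. Consequently, every matching M of G' for which G'[M] is disconnected saturates neither w1 nor w2, and is a matching of G with G[M] disconnected. -/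
open SimpleGraph

/-- The graph `G'` obtained from a bipartite graph `G` with bipartition `(V1, V2)` by
adding two new vertices `w1 = Sum.inr 0` and `w2 = Sum.inr 1`, the edge `w1 w2`,
all edges from `w1` to `V1` and all edges from `w2` to `V2`. -/
def bipExt {V : Type*} (G : SimpleGraph V) (V1 V2 : Set V) :
    SimpleGraph (V ⊕ Fin 2) :=
  SimpleGraph.fromRel (fun a b =>
    match a, b with
    | Sum.inl u, Sum.inl v => G.Adj u v
    | Sum.inl v, Sum.inr i => (i = 0 ∧ v ∈ V1) ∨ (i = 1 ∧ v ∈ V2)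
    | Sum.inr _, Sum.inl _ => False
    | Sum.inr i, Sum.inr j => i = 0 ∧ j = 1)

section Aux

variable {V : Type*} (G : SimpleGraph V) (V1 V2 : Set V)

lemma bipExt_adj_ll (u v : V) : (bipExt G V1 V2).Adj (.inl u) (.inl v) ↔ G.Adj u v := by
  rw [bipExt, fromRel_adj]
  constructor
  · rintro ⟨h, h' | h'⟩
    · exact h'
    · exact h'.symm
  · intro h; exact ⟨by simp [h.ne], Or.inl h⟩

lemma bipExt_adj_l0 (v : V) : (bipExt G V1 V2).Adj (.inl v) (.inr 0) ↔ v ∈ V1 := by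
  rw [bipExt, fromRel_adj]; simp

lemma bipExt_adj_l1 (v : V) : (bipExt G V1 V2).Adj (.inl v) (.inr 1) ↔ v ∈ V2 := by
  rw [bipExt, fromRel_adj]; simp [Fin.ext_iff]

lemma bipExt_adj_01 : (bipExt G V1 V2).Adj (.inr 0) (.inr 1) := by
  rw [bipExt, fromRel_adj]; simp

end Aux

/-- In the extended graph `G'`, every nonempty matching saturating `w1` or `w2` induces a
connected subgraph; consequently, every matching of `G'` inducing a disconnected subgraph
saturates neither `w1` nor `w2` and is a matching of `G` inducing a disconnected subgraph. -/
theorem bipExt_matching_connected {V : Type*} [Fintype V] (G : SimpleGraph V)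
    (V1 V2 : Set V) (hpart : V1 ∪ V2 = Set.univ) (hdisj : V1 ∩ V2 = ∅)
    (hbip : ∀ u v : V, G.Adj u v → (u ∈ V1 ∧ v ∈ V2) ∨ (u ∈ V2 ∧ v ∈ V1)) :
    (∀ M : Set (Sym2 (V ⊕ Fin 2)), MatchingEdges (bipExt G V1 V2) M → M.Nonempty →
      ((Sum.inr 0 : V ⊕ Fin 2) ∈ msat M ∨ (Sum.inr 1 : V ⊕ Fin 2) ∈ msat M) →
      ((bipExt G V1 V2).induce (msat M)).Connected) ∧
    (∀ M : Set (Sym2 (V ⊕ Fin 2)), MatchingEdges (bipExt G V1 V2) M →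
      ¬ ((bipExt G V1 V2).induce (msat M)).Connected →
      (Sum.inr 0 : V ⊕ Fin 2) ∉ msat M ∧ (Sum.inr 1 : V ⊕ Fin 2) ∉ msat M ∧
      ∃ M₀ : Set (Sym2 V), Sym2.map Sum.inl '' M₀ = M ∧ MatchingEdges G M₀ ∧
        ¬ (G.induce (msat M₀)).Connected) := by
  have hV12 : ∀ v : V, v ∉ V1 → v ∈ V2 := by
    intro v hv
    have : v ∈ V1 ∪ V2 := hpart ▸ Set.mem_univ v
    exact ((Set.mem_union _ _ _).mp this).resolve_left hv
  have hV21 : ∀ v : V, v ∉ V2 → v ∈ V1 := by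
    intro v hv
    have : v ∈ V1 ∪ V2 := hpart ▸ Set.mem_univ v
    exact ((Set.mem_union _ _ _).mp this).resolve_right hv
  have hnot12 : ∀ v : V, v ∈ V1 → v ∉ V2 := by
    intro v h1 h2
    have : v ∈ V1 ∩ V2 := ⟨h1, h2⟩
    rw [hdisj] at this
    exact this
  -- induce adjacency helper
  have hind : ∀ (S : Set (V ⊕ Fin 2)) (a b : V ⊕ Fin 2) (ha : a ∈ S) (hb : b ∈ S),
      (bipExt G V1 V2).Adj a b →
      ((bipExt G V1 V2).induce S).Adj ⟨a, ha⟩ ⟨b, hb⟩ := by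
    intro S a b ha hb h
    simpa [comap_adj] using h
  have key : ∀ M : Set (Sym2 (V ⊕ Fin 2)), MatchingEdges (bipExt G V1 V2) M →
      ((Sum.inr 0 : V ⊕ Fin 2) ∈ msat M ∨ (Sum.inr 1 : V ⊕ Fin 2) ∈ msat M) →
      ((bipExt G V1 V2).induce (msat M)).Connected := by
    intro M hM hsat
    rcases hsat with h0 | h1
    · -- hub is w1 = inr 0
      have hreach : ∀ x : ↑(msat M),
          ((bipExt G V1 V2).induce (msat M)).Reachable x ⟨.inr 0, h0⟩ := by
        rintro ⟨(v | i), hx⟩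
        · by_cases hv1 : v ∈ V1
          · exact ((hind _ _ _ hx h0 ((bipExt_adj_l0 G V1 V2 v).mpr hv1))).reachable
          · have hv2 : v ∈ V2 := hV12 v hv1
            obtain ⟨e, heM, hve⟩ := hx
            obtain ⟨y, rfl⟩ := Sym2.mem_iff_exists.mp hve
            have hySat : y ∈ msat M := ⟨_, heM, Sym2.mem_mk_right _ _⟩
            have hadj : (bipExt G V1 V2).Adj (.inl v) y := (hM.1 heM)
            have hx' : (Sum.inl v : V ⊕ Fin 2) ∈ msat M := ⟨_, heM, Sym2.mem_mk_left _ _⟩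
            match y, hySat, hadj with
            | .inl u, hySat, hadj =>
              have hGuv : G.Adj v u := (bipExt_adj_ll G V1 V2 v u).mp hadj
              have hu1 : u ∈ V1 := by
                rcases hbip v u hGuv with ⟨h, _⟩ | ⟨_, h⟩
                · exact absurd h hv1
                · exact h
              exact ((hind _ _ _ hx' hySat hadj).reachable).trans
                ((hind _ _ _ hySat h0 ((bipExt_adj_l0 G V1 V2 u).mpr hu1)).reachable)
            | .inr i, hySat, hadj =>
              fin_cases i
              · exact absurd ((bipExt_adj_l0 G V1 V2 v).mp hadj) hv1
              · exact ((hind _ _ _ hx' hySat hadj).reachable).trans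
                  ((hind _ _ _ hySat h0 (bipExt_adj_01 G V1 V2).symm).reachable)
        · fin_cases i
          · exact Reachable.refl _
          · exact ((hind _ _ _ hx h0 (bipExt_adj_01 G V1 V2).symm)).reachable
      rw [connected_iff]
      exact ⟨fun a b => (hreach a).trans (hreach b).symm, ⟨⟨.inr 0, h0⟩⟩⟩
    · -- hub is w2 = inr 1
      have hreach : ∀ x : ↑(msat M),
          ((bipExt G V1 V2).induce (msat M)).Reachable x ⟨.inr 1, h1⟩ := by
        rintro ⟨(v | i), hx⟩
        · by_cases hv2 : v ∈ V2
          · exact ((hind _ _ _ hx h1 ((bipExt_adj_l1 G V1 V2 v).mpr hv2))).reachable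
          · have hv1 : v ∈ V1 := hV21 v hv2
            obtain ⟨e, heM, hve⟩ := hx
            obtain ⟨y, rfl⟩ := Sym2.mem_iff_exists.mp hve
            have hySat : y ∈ msat M := ⟨_, heM, Sym2.mem_mk_right _ _⟩
            have hadj : (bipExt G V1 V2).Adj (.inl v) y := (hM.1 heM)
            have hx' : (Sum.inl v : V ⊕ Fin 2) ∈ msat M := ⟨_, heM, Sym2.mem_mk_left _ _⟩
            match y, hySat, hadj with
            | .inl u, hySat, hadj =>
              have hGuv : G.Adj v u := (bipExt_adj_ll G V1 V2 v u).mp hadj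
              have hu2 : u ∈ V2 := by
                rcases hbip v u hGuv with ⟨_, h⟩ | ⟨h, _⟩
                · exact h
                · exact absurd h hv2
              exact ((hind _ _ _ hx' hySat hadj).reachable).trans
                ((hind _ _ _ hySat h1 ((bipExt_adj_l1 G V1 V2 u).mpr hu2)).reachable)
            | .inr i, hySat, hadj =>
              fin_cases i
              · exact ((hind _ _ _ hx' hySat hadj).reachable).trans
                  ((hind _ _ _ hySat h1 (bipExt_adj_01 G V1 V2)).reachable)
              · exact absurd ((bipExt_adj_l1 G V1 V2 v).mp hadj) hv2
        · fin_cases i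
          · exact ((hind _ _ _ hx h1 (bipExt_adj_01 G V1 V2))).reachable
          · exact Reachable.refl _
      rw [connected_iff]
      exact ⟨fun a b => (hreach a).trans (hreach b).symm, ⟨⟨.inr 1, h1⟩⟩⟩
  refine ⟨fun M hM _ hsat => key M hM hsat, ?_⟩
  intro M hM hnc
  by_cases hne : M.Nonempty
  swap
  · rw [Set.not_nonempty_iff_eq_empty] at hne
    subst hne
    refine ⟨by simp [msat], by simp [msat], ∅, by simp, ⟨by simp, by simp⟩, ?_⟩
    intro h
    obtain ⟨⟨x, hx⟩⟩ := h.nonempty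
    simp [msat] at hx
  · have hn0 : (Sum.inr 0 : V ⊕ Fin 2) ∉ msat M := fun h => hnc (key M hM (Or.inl h))
    have hn1 : (Sum.inr 1 : V ⊕ Fin 2) ∉ msat M := fun h => hnc (key M hM (Or.inr h))
    have hinl : ∀ x ∈ msat M, ∃ v : V, x = Sum.inl v := by
      rintro (v | i) hx
      · exact ⟨v, rfl⟩
      · fin_cases i
        · exact absurd hx hn0
        · exact absurd hx hn1
    set M₀ : Set (Sym2 V) := {e | Sym2.map Sum.inl e ∈ M} with hM₀def
    have himg : Sym2.map Sum.inl '' M₀ = M := by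
      apply Set.Subset.antisymm
      · rintro e ⟨e₀, he₀, rfl⟩; exact he₀
      · intro e
        induction e using Sym2.ind with
        | _ a b =>
          intro he
          obtain ⟨u, rfl⟩ := hinl a ⟨_, he, Sym2.mem_mk_left a b⟩
          obtain ⟨v, rfl⟩ := hinl b ⟨_, he, Sym2.mem_mk_right _ b⟩
          exact ⟨s(u, v), by simpa [hM₀def, Sym2.map_pair_eq] using he, by
            simp [Sym2.map_pair_eq]⟩
    have hmem : ∀ (e : Sym2 V) (v : V), v ∈ e →
        (Sum.inl v : V ⊕ Fin 2) ∈ Sym2.map (Sum.inl : V → V ⊕ Fin 2) e :=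
      fun e v hv => Sym2.mem_map.mpr ⟨v, hv, rfl⟩
    have hMat : MatchingEdges G M₀ := by
      constructor
      · intro e
        induction e using Sym2.ind with
        | _ u v =>
          intro he
          have : (bipExt G V1 V2).Adj (.inl u) (.inl v) := by
            have := hM.1 (show Sym2.map Sum.inl s(u, v) ∈ M from he)
            rwa [Sym2.map_pair_eq, mem_edgeSet] at this
          exact (bipExt_adj_ll G V1 V2 u v).mp this
      · intro e he f hf hef v hv hvf
        exact hM.2 _ he _ hf
          (fun h => hef (Sym2.map.injective Sum.inl_injective h))
          (Sum.inl v) (hmem e v hv) (hmem f v hvf)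
    have hsat_iff : ∀ v : V, v ∈ msat M₀ ↔ Sum.inl v ∈ msat M := by
      intro v
      constructor
      · rintro ⟨e, he, hv⟩
        exact ⟨Sym2.map Sum.inl e, he, hmem e v hv⟩
      · rintro ⟨e, he, hv⟩
        rw [← himg] at he
        obtain ⟨e₀, he₀, rfl⟩ := he
        obtain ⟨u, hu, huv⟩ := Sym2.mem_map.mp hv
        obtain rfl := Sum.inl_injective huv
        exact ⟨e₀, he₀, hu⟩
    refine ⟨hn0, hn1, M₀, himg, hMat, ?_⟩
    intro hc
    apply hnc
    let f : G.induce (msat M₀) →g (bipExt G V1 V2).induce (msat M) :=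
      { toFun := fun x => ⟨Sum.inl x.1, (hsat_iff x.1).mp x.2⟩
        map_rel' := fun {a b} h => by
          simp only [comap_adj, Function.Embedding.coe_subtype] at h ⊢
          exact (bipExt_adj_ll G V1 V2 _ _).mpr h }
    rw [connected_iff]
    constructor
    · rintro ⟨a, ha⟩ ⟨b, hb⟩
      obtain ⟨va, rfl⟩ := hinl a ha
      obtain ⟨vb, rfl⟩ := hinl b hb
      exact (hc.preconnected ⟨va, (hsat_iff va).mpr ha⟩ ⟨vb, (hsat_iff vb).mpr hb⟩).map f
    · obtain ⟨e, he⟩ := hne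
      exact ⟨⟨e.out.1, ⟨e, he, Sym2.out_fst_mem e⟩⟩⟩
end

section
/- Let G be a finite connected simple graph, M a matching of G, and u, v two M-saturated vertices lying in different connected components of the subgraph G[M] induced by the M-saturated vertices. Then there exists a minimal u-v separator S of G with S disjoint from V(M). -/
open SimpleGraph

/-- `S` is a `u`-`v` separator of `G`: `u, v ∉ S` and `u` and `v` lie in distinct
connected components of `G - S`. -/
def IsSeparator {V : Type*} (G : SimpleGraph V) (u v : V) (S : Set V) : Prop :=
  ∃ (hu : u ∉ S) (hv : v ∉ S),
    ¬ (G.induce (Sᶜ : Set V)).Reachable ⟨u, hu⟩ ⟨v, hv⟩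

lemma induce_reachable_congr {V : Type*} (G : SimpleGraph V) {A B : Set V} (h : A = B)
    {u v : V} (hu : u ∈ A) (hv : v ∈ A) :
    (G.induce A).Reachable ⟨u, hu⟩ ⟨v, hv⟩ ↔
      (G.induce B).Reachable ⟨u, h ▸ hu⟩ ⟨v, h ▸ hv⟩ := by
  subst h; rfl

/-- If `u` and `v` are `M`-saturated vertices lying in distinct connected components of
the subgraph induced by the `M`-saturated vertices of a connected graph `G`, then there
is a minimal `u`-`v` separator of `G` disjoint from the `M`-saturated vertices. -/
theorem exists_minimal_separator_disjoint_matching {V : Type*} [Fintype V]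
    (G : SimpleGraph V) (hconn : G.Connected) (M : Set (Sym2 V))
    (hM : MatchingEdges G M) (u v : V) (hu : u ∈ msat M) (hv : v ∈ msat M)
    (hsep : ¬ (G.induce (msat M)).Reachable ⟨u, hu⟩ ⟨v, hv⟩) :
    ∃ S : Set V, IsSeparator G u v S ∧
      (∀ S' : Set V, S' ⊂ S → ¬ IsSeparator G u v S') ∧ S ∩ msat M = ∅ := by
  classical
  have h0 : IsSeparator G u v ((msat M)ᶜ) ∧ (msat M)ᶜ ⊆ (msat M)ᶜ := by
    refine ⟨⟨fun h => h hu, fun h => h hv, ?_⟩, subset_rfl⟩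
    intro hr
    apply hsep
    exact (induce_reachable_congr G (compl_compl (msat M))
      (show u ∈ ((msat M)ᶜ)ᶜ from fun h => h hu)
      (show v ∈ ((msat M)ᶜ)ᶜ from fun h => h hv)).mp hr
  have hwf : WellFounded ((· < ·) : Set V → Set V → Prop) := wellFounded_lt
  obtain ⟨S, hS, hmin⟩ := hwf.has_min
    {S | IsSeparator G u v S ∧ S ⊆ (msat M)ᶜ} ⟨_, h0⟩
  refine ⟨S, hS.1, ?_, ?_⟩
  · intro S' hlt hsep'
    exact hmin S' ⟨hsep', hlt.subset.trans hS.2⟩ hlt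
  · ext x
    simp only [Set.mem_inter_iff, Set.mem_empty_iff_false, iff_false, not_and]
    exact fun hx hm => hS.2 hx hm
end

section
/- The graph G(C,X) of the exact-cover construction is chordal: it contains no induced cycle on four or more vertices. -/
/-!
Every vertex outside the clique `{w_{i,x}}` is simplicial: the neighbours of `w_i^±` lie in the
clique `W_i`, and those of `v_x` are among the `w_{i,x}`. A vertex of an induced cycle of length at
least four is never simplicial, because its two neighbours on the cycle are distinct and
non-adjacent. Hence such a cycle would lie entirely in the clique `{w_{i,x}}`, which is absurd.
-/

open SimpleGraph

/-- Vertex type of the exact-cover construction: `Sum.inl ⟨i, x⟩` is `w_{i,x}` (for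
`x ∈ c_i`), `Sum.inr (Sum.inl (i, 0))` is `w_i^+`, `Sum.inr (Sum.inl (i, 1))` is
`w_i^-`, and `Sum.inr (Sum.inr x)` is `v_x`. -/
abbrev XCVert (α : Type*) (m : ℕ) (C : Fin m → Finset α) : Type _ :=
  (Σ i : Fin m, {x : α // x ∈ C i}) ⊕ ((Fin m × Fin 2) ⊕ α)

/-- The graph `G(C,X)` of the exact-cover construction: each `W_i` is a clique on
`{w_{i,x} : x ∈ c_i} ∪ {w_i^+, w_i^-}`, all edges between `{w_{i,x}}` and `{w_{j,y}}`
for `i ≠ j` are present, and `v_x` is adjacent to `w_{i,x}` for each `i` with `x ∈ c_i`. -/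
def XCGraph {α : Type*} (m : ℕ) (C : Fin m → Finset α) :
    SimpleGraph (XCVert α m C) :=
  SimpleGraph.fromRel (fun a b =>
    match a, b with
    | Sum.inl _, Sum.inl _ => True
    | Sum.inl ⟨i, _⟩, Sum.inr (Sum.inl (j, _)) => i = j
    | Sum.inr (Sum.inl (i, _)), Sum.inr (Sum.inl (j, _)) => i = j
    | Sum.inl ⟨_, x⟩, Sum.inr (Sum.inr y) => (x : α) = y
    | _, _ => False)

open Fin.CommRing in
lemma Fin.sub_one_ne_add_one {N : ℕ} (k : Fin (N + 3)) : k - 1 ≠ k + 1 := by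
  intro h
  have : (2 : Fin (N + 3)) = 0 := by linear_combination -h
  simp [Fin.ext_iff, Nat.mod_eq_of_lt (show 2 < N + 3 by omega)] at this

namespace SimpleGraph

variable {V : Type*} {G : SimpleGraph V}

open Fin.CommRing in
lemma cycleGraph_not_adj_sub_one_add_one {N : ℕ} (k : Fin (N + 4)) :
    ¬ (cycleGraph (N + 4)).Adj (k - 1) (k + 1) := by
  rintro (h | h)
  · have : (3 : Fin (N + 4)) = 0 := by linear_combination -h
    simp [Fin.ext_iff, Nat.mod_eq_of_lt (show 3 < N + 4 by omega)] at this
  · have : (1 : Fin (N + 4)) = 0 := by linear_combination h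
    simp at this

def IsSimplicial (G : SimpleGraph V) (v : V) : Prop := G.IsClique (G.neighborSet v)

lemma Embedding.not_isSimplicial_of_cycleGraph {N : ℕ} (f : cycleGraph (N + 4) ↪g G)
    (k : Fin (N + 4)) : ¬ G.IsSimplicial (f k) := by
  intro hk
  have hpred : f (k - 1) ∈ G.neighborSet (f k) := by
    rw [mem_neighborSet, f.map_adj_iff, cycleGraph_adj]; simp
  have hsucc : f (k + 1) ∈ G.neighborSet (f k) := by
    rw [mem_neighborSet, f.map_adj_iff, cycleGraph_adj]; simp
  exact cycleGraph_not_adj_sub_one_add_one k <| f.map_adj_iff.mp <|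
    hk hpred hsucc (f.injective.ne k.sub_one_ne_add_one)

theorem isEmpty_cycleGraph_embedding_of_isClique {s : Set V} (hs : G.IsClique s)
    (hsimp : ∀ v ∉ s, G.IsSimplicial v) {n : ℕ} (hn : 4 ≤ n) :
    IsEmpty (cycleGraph n ↪g G) := by
  obtain ⟨N, rfl⟩ := Nat.exists_eq_add_of_le' hn
  refine ⟨fun f => ?_⟩
  have hmem (k : Fin (N + 4)) : f k ∈ s := by
    by_contra hk
    exact f.not_isSimplicial_of_cycleGraph k (hsimp _ hk)
  exact cycleGraph_not_adj_sub_one_add_one 0 <| f.map_adj_iff.mp <|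
    hs (hmem _) (hmem _) (f.injective.ne (Fin.sub_one_ne_add_one 0))

end SimpleGraph

section XCGraph

variable {α : Type*} {m : ℕ} {C : Fin m → Finset α}

lemma XCGraph_isClique_range_inl : (XCGraph m C).IsClique (Set.range Sum.inl) := by
  rintro _ ⟨p, rfl⟩ _ ⟨q, rfl⟩ hpq
  exact (fromRel_adj _ _ _).mpr ⟨hpq, Or.inl trivial⟩

lemma XCGraph_isSimplicial_inr (t : (Fin m × Fin 2) ⊕ α) :
    (XCGraph m C).IsSimplicial (Sum.inr t) := by
  intro a ha b hb hab
  simp only [mem_neighborSet, XCGraph, fromRel_adj] at ha hb ⊢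
  refine ⟨hab, ?_⟩
  rcases a with ⟨i, x⟩ | (⟨i, e⟩ | x) <;> rcases b with ⟨j, y⟩ | (⟨j, e'⟩ | y) <;>
    rcases t with ⟨l, d⟩ | z <;> grind

end XCGraph

theorem XCGraph_chordal_general {α : Type*} (m : ℕ) (C : Fin m → Finset α) :
    ∀ n : ℕ, 4 ≤ n → IsEmpty (SimpleGraph.cycleGraph n ↪g XCGraph m C) := by
  intro n hn
  refine isEmpty_cycleGraph_embedding_of_isClique XCGraph_isClique_range_inl ?_ hn
  rintro (p | t) hv
  · exact absurd ⟨p, rfl⟩ hv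
  · exact XCGraph_isSimplicial_inr t

/-- The graph `G(C,X)` of the exact-cover construction is chordal: it contains no
induced cycle on four or more vertices. -/
theorem XCGraph_chordal {α : Type*} [Fintype α] [DecidableEq α] (q m : ℕ)
    (hq : Fintype.card α = 3 * q) (C : Fin m → Finset α)
    (hC : ∀ i, (C i).card = 3) :
    ∀ n : ℕ, 4 ≤ n → IsEmpty (SimpleGraph.cycleGraph n ↪g XCGraph m C) :=
  XCGraph_chordal_general m C
end

section
/- Let X be a finite set with |X| = 3q and C = {c_1, ..., c_m} a family of three-element subsets of X. If the graph G(C,X) has a matching M with at least m + 3q edges such that the subgraph G(C,X)[M] induced by the M-saturated vertices has at least m - q + 1 connected components, then there exists an exact cover of X by sets of C. -/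
open SimpleGraph

/-- There is an exact cover of `X = α` by sets of the family `C`: a subfamily of
pairwise disjoint sets whose union is all of `X`. -/
def ExactCoverFam {α : Type*} [Fintype α] [DecidableEq α] {m : ℕ}
    (C : Fin m → Finset α) : Prop :=
  ∃ T : Finset (Fin m), (∀ i ∈ T, ∀ j ∈ T, i ≠ j → Disjoint (C i) (C j)) ∧
    T.biUnion C = Finset.univ

/-!
All saturated element vertices `w_{i,x}` lie in one clique, and a saturated `v_x` is matched
to some `w_{i,x}`; so apart from that one component, every component consists of vertices
`w_i^±` of a clique `i` none of whose element vertices is saturated. With `N` the set of the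
other cliques, the component bound gives `|N| ≤ q`. On the other hand the at least
`2(m + 3q)` saturated vertices are at most `3|N|` element vertices, `2m` vertices `w_i^±`
and the vertices `v_x` with `x ∈ ⋃_{i ∈ N} c_i`, a set of size at most `3|N|`. Hence
`|N| = q`, and the `q` triples `c_i`, `i ∈ N`, cover all `3q` points, so they are disjoint.
-/

open SimpleGraph Finset

theorem Finset.pairwiseDisjoint_of_card_biUnion_eq_sum {ι β : Type*} [DecidableEq ι]
    [DecidableEq β] {s : Finset ι} {t : ι → Finset β}
    (h : #(s.biUnion t) = ∑ i ∈ s, #(t i)) : (s : Set ι).PairwiseDisjoint t := by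
  induction s using Finset.induction_on with
  | empty => simp
  | insert a s ha ih =>
    rw [biUnion_insert, sum_insert ha] at h
    have hunion := card_union_le (t a) (s.biUnion t)
    have hbiUnion : #(s.biUnion t) ≤ ∑ i ∈ s, #(t i) := card_biUnion_le
    have hdisj : Disjoint (t a) (s.biUnion t) := card_union_eq_card_add_card.mp (by omega)
    rw [coe_insert, Set.pairwiseDisjoint_insert_of_notMem (mem_coe.not.mpr ha)]
    exact ⟨ih (by omega), (disjoint_biUnion_right _ _ _).mp hdisj⟩

theorem SimpleGraph.card_connectedComponent_le_of_reachable {V β : Type*} {G : SimpleGraph V}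
    [Finite β] (f : V → β) (hf : ∀ u v, f u = f v → G.Reachable u v) :
    Nat.card G.ConnectedComponent ≤ Nat.card β := by
  refine Nat.card_le_card_of_injective (fun c => f c.exists_rep.choose) fun c d hcd => ?_
  rw [← c.exists_rep.choose_spec, ← d.exists_rep.choose_spec]
  exact ConnectedComponent.sound (hf _ _ hcd)

theorem SimpleGraph.reachable_induce_of_eq_or_adj {V : Type*} {G : SimpleGraph V} {s : Set V}
    {u v : V} (hu : u ∈ s) (hv : v ∈ s) (h : u = v ∨ G.Adj u v) :
    (G.induce s).Reachable ⟨u, hu⟩ ⟨v, hv⟩ := by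
  rcases h with rfl | hadj
  · rfl
  · exact Adj.reachable (induce_adj.mpr hadj)

section Matching

variable {V : Type*} {G : SimpleGraph V} {M : Set (Sym2 V)}

theorem exists_adj_mem_msat (hM : M ⊆ G.edgeSet) {v : V} (hv : v ∈ msat M) :
    ∃ u ∈ msat M, G.Adj v u := by
  obtain ⟨e, he, hve⟩ := hv
  refine ⟨Sym2.Mem.other hve, ⟨e, he, Sym2.other_mem hve⟩, ?_⟩
  rw [← G.mem_edgeSet, Sym2.other_spec hve]
  exact hM he

theorem MatchingEdges.ncard_msat [Finite V] (hM : MatchingEdges G M) :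
    (msat M).ncard = 2 * M.ncard := by
  classical
  have := Fintype.ofFinite V
  have hmsat : msat M = ↑(M.toFinset.biUnion Sym2.toFinset) := by
    ext v
    simp [msat]
  have hdisj : (M.toFinset : Set (Sym2 V)).PairwiseDisjoint Sym2.toFinset :=
    fun e he f hf hef => disjoint_left.mpr fun v hve hvf =>
      hM.2 e (by simpa using he) f (by simpa using hf) hef v (by simpa using hve)
        (by simpa using hvf)
  have hcard : ∀ e ∈ M.toFinset, #e.toFinset = 2 := fun e he =>
    Sym2.card_toFinset_of_not_isDiag e (G.not_isDiag_of_mem_edgeSet (hM.1 (by simpa using he)))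
  rw [hmsat, Set.ncard_coe_finset, card_biUnion hdisj, sum_congr rfl hcard, sum_const,
    smul_eq_mul, mul_comm, Set.ncard_eq_toFinset_card']

end Matching

namespace XCGraph

variable {α : Type*} {m : ℕ} {C : Fin m → Finset α}

theorem adj_inl_inl {p p' : Σ i : Fin m, {x : α // x ∈ C i}} (h : p ≠ p') :
    (XCGraph m C).Adj (Sum.inl p) (Sum.inl p') := by
  simp [XCGraph, fromRel_adj, h]

theorem adj_inl_pm (i : Fin m) (x : {x : α // x ∈ C i}) (s : Fin 2) :
    (XCGraph m C).Adj (Sum.inl ⟨i, x⟩) (Sum.inr (Sum.inl (i, s))) := by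
  simp [XCGraph, fromRel_adj]

theorem adj_pm_pm (i : Fin m) {s t : Fin 2} (h : s ≠ t) :
    (XCGraph m C).Adj (Sum.inr (Sum.inl (i, s)) : XCVert α m C) (Sum.inr (Sum.inl (i, t))) := by
  simp [XCGraph, fromRel_adj, h]

theorem eq_inl_of_adj_vx {x : α} {u : XCVert α m C}
    (h : (XCGraph m C).Adj (Sum.inr (Sum.inr x)) u) :
    ∃ (i : Fin m) (hx : x ∈ C i), u = Sum.inl ⟨i, ⟨x, hx⟩⟩ := by
  rcases u with ⟨i, y, hy⟩ | (⟨i, s⟩ | y)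
  · obtain rfl : y = x := by simpa [XCGraph, fromRel_adj] using h
    exact ⟨i, hy, rfl⟩
  all_goals simp [XCGraph, fromRel_adj] at h

variable {M : Set (Sym2 (XCVert α m C))}

open scoped Classical in
noncomputable def matchedCliques (M : Set (Sym2 (XCVert α m C))) : Finset (Fin m) :=
  univ.filter fun i => ∃ x : {x // x ∈ C i}, (Sum.inl ⟨i, x⟩ : XCVert α m C) ∈ msat M

theorem mem_matchedCliques {i : Fin m} :
    i ∈ matchedCliques M ↔
      ∃ x : {x // x ∈ C i}, (Sum.inl ⟨i, x⟩ : XCVert α m C) ∈ msat M := by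
  simp [matchedCliques]

theorem exists_inl_mem_msat_of_vx_mem_msat (hM : M ⊆ (XCGraph m C).edgeSet) {x : α}
    (hx : (Sum.inr (Sum.inr x) : XCVert α m C) ∈ msat M) :
    ∃ (i : Fin m) (hxi : x ∈ C i),
      (Sum.inl ⟨i, ⟨x, hxi⟩⟩ : XCVert α m C) ∈ msat M ∧
      (XCGraph m C).Adj (Sum.inr (Sum.inr x)) (Sum.inl ⟨i, ⟨x, hxi⟩⟩) := by
  obtain ⟨u, hu, hadj⟩ := exists_adj_mem_msat hM hx
  obtain ⟨i, hxi, rfl⟩ := eq_inl_of_adj_vx hadj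
  exact ⟨i, hxi, hu, hadj⟩

noncomputable def componentKey (M : Set (Sym2 (XCVert α m C))) :
    XCVert α m C → Option {i // i ∉ matchedCliques M}
  | Sum.inr (Sum.inl (i, _)) => if h : i ∈ matchedCliques M then none else some ⟨i, h⟩
  | _ => none

theorem eq_pm_of_componentKey_eq_some {v : XCVert α m C} {i : {i // i ∉ matchedCliques M}}
    (h : componentKey M v = some i) : ∃ s, v = Sum.inr (Sum.inl (i.1, s)) := by
  rcases v with _ | (⟨j, s⟩ | _)
  · simp [componentKey] at h
  · by_cases hj : j ∈ matchedCliques M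
    · simp [componentKey, hj] at h
    · simp only [componentKey, hj, dite_false, Option.some.injEq] at h
      exact ⟨s, by rw [← h]⟩
  · simp [componentKey] at h

theorem exists_inl_reachable_of_componentKey_eq_none (hM : M ⊆ (XCGraph m C).edgeSet)
    {v : XCVert α m C} (hv : v ∈ msat M) (hkey : componentKey M v = none) :
    ∃ p, ∃ hp : (Sum.inl p : XCVert α m C) ∈ msat M,
      ((XCGraph m C).induce (msat M)).Reachable ⟨v, hv⟩ ⟨_, hp⟩ := by
  rcases v with p | (⟨i, s⟩ | x)
  · exact ⟨p, hv, .refl _⟩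
  · have hi : i ∈ matchedCliques M := by
      by_contra hi
      simp [componentKey, hi] at hkey
    obtain ⟨x, hx⟩ := mem_matchedCliques.mp hi
    exact ⟨_, hx, reachable_induce_of_eq_or_adj hv hx (Or.inr (adj_inl_pm i x s).symm)⟩
  · obtain ⟨i, hxi, hsat, hadj⟩ := exists_inl_mem_msat_of_vx_mem_msat hM hv
    exact ⟨_, hsat, reachable_induce_of_eq_or_adj hv hsat (Or.inr hadj)⟩

theorem reachable_of_componentKey_eq (hM : M ⊆ (XCGraph m C).edgeSet) (u v : msat M)
    (h : componentKey M u = componentKey M v) :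
    ((XCGraph m C).induce (msat M)).Reachable u v := by
  obtain ⟨u, hu⟩ := u
  obtain ⟨v, hv⟩ := v
  cases hkey : componentKey M u with
  | none =>
    obtain ⟨p, hp, hup⟩ := exists_inl_reachable_of_componentKey_eq_none hM hu hkey
    obtain ⟨p', hp', hvp'⟩ :=
      exists_inl_reachable_of_componentKey_eq_none hM hv (h ▸ hkey)
    refine hup.trans ((reachable_induce_of_eq_or_adj hp hp' ?_).trans hvp'.symm)
    by_cases hpp' : p = p'
    · exact Or.inl (congrArg _ hpp')
    · exact Or.inr (adj_inl_inl hpp')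
  | some i =>
    obtain ⟨s, rfl⟩ := eq_pm_of_componentKey_eq_some hkey
    obtain ⟨t, rfl⟩ := eq_pm_of_componentKey_eq_some (h ▸ hkey)
    refine reachable_induce_of_eq_or_adj hu hv ?_
    by_cases hst : s = t
    · exact Or.inl (by rw [hst])
    · exact Or.inr (adj_pm_pm _ hst)

theorem card_connectedComponent_le (hM : M ⊆ (XCGraph m C).edgeSet) :
    Nat.card ((XCGraph m C).induce (msat M)).ConnectedComponent ≤
      m - #(matchedCliques M) + 1 := by
  calc Nat.card ((XCGraph m C).induce (msat M)).ConnectedComponent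
      ≤ Nat.card (Option {i // i ∉ matchedCliques M}) :=
        card_connectedComponent_le_of_reachable (fun v => componentKey M v)
          (reachable_of_componentKey_eq hM)
    _ = m - #(matchedCliques M) + 1 := by
        simp [Nat.card_eq_fintype_card, Fintype.card_subtype_compl]

theorem ncard_msat_le [DecidableEq α] (hM : M ⊆ (XCGraph m C).edgeSet) :
    (msat M).ncard ≤
      ∑ i ∈ matchedCliques M, #(C i) + 2 * m + #((matchedCliques M).biUnion C) := by
  set N := matchedCliques M
  let A : Finset (XCVert α m C) := (N.sigma fun i => univ).image Sum.inl
  let B : Finset (XCVert α m C) := univ.image (Sum.inr ∘ Sum.inl)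
  let D : Finset (XCVert α m C) := (N.biUnion C).image (Sum.inr ∘ Sum.inr)
  have hsub : msat M ⊆ ↑(A ∪ B ∪ D) := by
    intro v hv
    rcases v with ⟨i, x⟩ | (⟨i, s⟩ | x)
    · have hi : i ∈ N := mem_matchedCliques.mpr ⟨x, hv⟩
      simp [A, hi]
    · simp [B]
    · obtain ⟨i, hxi, hsat, -⟩ := exists_inl_mem_msat_of_vx_mem_msat hM hv
      have hi : i ∈ N := mem_matchedCliques.mpr ⟨_, hsat⟩
      simp only [coe_union, Set.mem_union, mem_coe, D, mem_image, mem_biUnion]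
      exact Or.inr ⟨x, ⟨i, hi, hxi⟩, rfl⟩
  have hA : #A ≤ ∑ i ∈ N, #(C i) := card_image_le.trans (by simp)
  have hB : #B ≤ 2 * m := card_image_le.trans (by simp [mul_comm])
  have hD : #D ≤ #(N.biUnion C) := card_image_le
  calc (msat M).ncard ≤ #(A ∪ B ∪ D) := by
        rw [← Set.ncard_coe_finset]
        exact Set.ncard_le_ncard hsub
    _ ≤ #A + #B + #D := (card_union_le _ _).trans (by grw [card_union_le])
    _ ≤ _ := by omega

end XCGraph

open XCGraph in
/-- If `G(C,X)` has a matching `M` with at least `m + 3q` edges whose saturated vertices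
induce a subgraph with at least `m - q + 1` connected components, then there is an exact
cover of `X` by sets of `C`. -/
theorem disconnected_matching_to_exactCover {α : Type*} [Fintype α] [DecidableEq α]
    (q m : ℕ) (hq : Fintype.card α = 3 * q) (C : Fin m → Finset α)
    (hC : ∀ i, (C i).card = 3)
    (hM : ∃ M : Set (Sym2 (XCVert α m C)), MatchingEdges (XCGraph m C) M ∧
      m + 3 * q ≤ M.ncard ∧
      m - q + 1 ≤ Nat.card ((XCGraph m C).induce (msat M)).ConnectedComponent) :
    ExactCoverFam C := by
  obtain ⟨M, hM, hcard, hcomp⟩ := hM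
  have hcomp' := card_connectedComponent_le hM.1
  have hsat := hM.ncard_msat
  have hsatle := ncard_msat_le hM.1
  set N := matchedCliques M
  have hNq : #N ≤ q := by
    have hNm : #N ≤ m := (card_le_univ N).trans_eq (Fintype.card_fin m)
    omega
  have hsum : ∑ i ∈ N, #(C i) = 3 * #N := by simp [hC, mul_comm]
  have hunion : #(N.biUnion C) ≤ ∑ i ∈ N, #(C i) := card_biUnion_le
  have hcover : #(N.biUnion C) = Fintype.card α := by omega
  exact ⟨N, fun i hi j hj => pairwiseDisjoint_of_card_biUnion_eq_sum (by omega) hi hj,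
    eq_univ_of_card _ hcover⟩
end
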